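/- Let (θ,ρ) ∈ ℝ^{2d}, h > 0, R ≥ 1, M ∈ ℕ, and (B,ℓ,a,b,L) ∈ D, and set B* = B*(L,a,b,B). Then the no-U-turn orbit selection distribution satisfies P(a, b, ℓ | θ, ρ, B, h, R) = P(a−L, b−L, ℓ | Φ_{h/R}^{RL}(θ,ρ), B*, h, R); that is, (ℓ = ℓ_min(θ,ρ,B,h,R) and a = a_ℓ(B) and b = b_ℓ(B)) holds if and only if (ℓ = ℓ_min(Φ_{h/R}^{RL}(θ,ρ),B*,h,R) and a−L = a_ℓ(B*) and b−L = b_ℓ(B*)). -/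

import Mathlib

open MeasureTheory

noncomputable section

/-! ### Combinatorial definitions for NUTS orbit selection -/

/-- Floor midpoint `⌊(a+b)/2⌋`. -/
def mid (a b : ℤ) : ℤ := (a + b) / 2

/-- `(−1)^x` for a bit `x`. -/
def signBit (x : Bool) : ℤ := if x then -1 else 1

/-- Left endpoint `a_ℓ(B)` of the orbit built from the Bernoulli directions `B` (1-indexed). -/
def aEnd (B : ℕ → Bool) : ℕ → ℤ
  | 0 => 0
  | ℓ + 1 => min (aEnd B ℓ) (aEnd B ℓ + signBit (B (ℓ + 1)) * 2 ^ ℓ)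

/-- Right endpoint `b_ℓ(B)`. -/
def bEnd (B : ℕ → Bool) : ℕ → ℤ
  | 0 => 0
  | ℓ + 1 => max (bEnd B ℓ) (bEnd B ℓ + signBit (B (ℓ + 1)) * 2 ^ ℓ)

/-- Proposed extension endpoint `ã_ℓ(B) = a_{ℓ−1}(B) + (−1)^{B_ℓ} 2^{ℓ−1}` (for `ℓ ≥ 1`). -/
def aT (B : ℕ → Bool) (ℓ : ℕ) : ℤ := aEnd B (ℓ - 1) + signBit (B ℓ) * 2 ^ (ℓ - 1)

/-- Proposed extension endpoint `b̃_ℓ(B) = b_{ℓ−1}(B) + (−1)^{B_ℓ} 2^{ℓ−1}` (for `ℓ ≥ 1`). -/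
def bT (B : ℕ → Bool) (ℓ : ℕ) : ℤ := bEnd B (ℓ - 1) + signBit (B ℓ) * 2 ^ (ℓ - 1)

/-- The binary string `β(L,a,b)`: `beta ℓ L a b i` is the `i`-th bit (1-indexed) of
`(β_i(L,a,b))_{i ∈ [1:ℓ]}`, where `[a:b]` is an interval with `b − a + 1 = 2^ℓ`. -/
def beta : ℕ → ℤ → ℤ → ℤ → ℕ → Bool
  | 0, _, _, _, _ => false
  | ℓ + 1, L, a, b, i =>
      if i = ℓ + 1 then decide (mid a b + 1 ≤ L)
      else if mid a b + 1 ≤ L then beta ℓ L (mid a b + 1) b i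
      else beta ℓ L a (mid a b) i

/-- The transformed sequence `B*(L,a,b,B)`: bits `1..ℓ` come from `β(L,a,b)`, the rest from `B`. -/
def bstar (ℓ : ℕ) (L a b : ℤ) (B : ℕ → Bool) : ℕ → Bool :=
  fun i => if 1 ≤ i ∧ i ≤ ℓ then beta ℓ L a b i else B i

/-- The domain `D`: tuples `(B, ℓ, a, b, L)` with `ℓ ∈ [1:M]`, `a = a_ℓ(B)`, `b = b_ℓ(B)`,
`a ≤ L ≤ b`. -/
def memD (M : ℕ) (B : ℕ → Bool) (ℓ : ℕ) (a b L : ℤ) : Prop :=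
  1 ≤ ℓ ∧ ℓ ≤ M ∧ a = aEnd B ℓ ∧ b = bEnd B ℓ ∧ a ≤ L ∧ L ≤ b

/-- The levels of the binary tree of subintervals of `[a:b]`: `treeLevel a b k` is the family of
intervals (coded as pairs) obtained from `[a:b]` by `k` successive halvings; with
`b − a + 1 = 2^ℓ` this is `T_{ℓ−k}([a:b])` of the paper. -/
def treeLevel (a b : ℤ) : ℕ → Set (ℤ × ℤ)
  | 0 => {(a, b)}
  | k + 1 => {p | ∃ q ∈ treeLevel a b k,
      p = (q.1, mid q.1 q.2) ∨ p = (mid q.1 q.2 + 1, q.2)}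

/-- The binary tree `T([a:b]) = ∪_{j=0}^{ℓ} T_j([a:b])` of subintervals of an interval `[a:b]`
with `b − a + 1 = 2^ℓ`. -/
def tree (ℓ : ℕ) (a b : ℤ) : Set (ℤ × ℤ) := ⋃ k ≤ ℓ, treeLevel a b k

/-! ### Leapfrog dynamics -/

/-- The state space `ℝ^d`. -/
abbrev ES (d : ℕ) := EuclideanSpace ℝ (Fin d)

/-- The momentum flip `S(θ,ρ) = (θ,−ρ)`. -/
def flipMom {d : ℕ} (p : ES d × ES d) : ES d × ES d := (p.1, -p.2)

/-- One leapfrog step of size `h` for the potential `U`. -/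
def leapfrog {d : ℕ} (U : ES d → ℝ) (h : ℝ) (p : ES d × ES d) : ES d × ES d :=
  let ρh := p.2 - (h / 2) • gradient U p.1
  let θ' := p.1 + h • ρh
  (θ', ρh - (h / 2) • gradient U θ')

/-- Integer iterates `Φ_h^i`, `i ∈ ℤ`, of the leapfrog integrator (negative iterates use the
inverse `S ∘ Φ_h ∘ S`). -/
def leapfrogIter {d : ℕ} (U : ES d → ℝ) (h : ℝ) : ℤ → ES d × ES d → ES d × ES d
  | Int.ofNat n => (leapfrog U h)^[n]
  | Int.negSucc n => (flipMom ∘ leapfrog U h ∘ flipMom)^[n + 1]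

/-- The Hamiltonian `H(θ,ρ) = U(θ) + |ρ|²/2`. -/
def Ham {d : ℕ} (U : ES d → ℝ) (p : ES d × ES d) : ℝ := U p.1 + (1 / 2) * ‖p.2‖ ^ 2

open Classical in
/-- The U-turn indicator `𝟙_Uturn(a,b,θ,ρ,h,R)` (coarse step size `hs`, fine step `hs/R`). -/
def uturnInd {d : ℕ} (U : ES d → ℝ) (hs : ℝ) (R : ℕ) (a b : ℤ) (p : ES d × ES d) : ℕ :=
  let qm := leapfrogIter U (hs / R) (R * a) p
  let qp := leapfrogIter U (hs / R) (R * b) p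
  if (inner ℝ qp.2 (qp.1 - qm.1) : ℝ) < 0 ∨ (inner ℝ qm.2 (qp.1 - qm.1) : ℝ) < 0 then 1 else 0

/-- The sub-U-turn indicator `𝟙_subUturn(a,b,θ,ρ,h,R)`, defined recursively by halving. -/
def subUturnInd {d : ℕ} (U : ES d → ℝ) (hs : ℝ) (R : ℕ) (p : ES d × ES d) (a b : ℤ) : ℕ :=
  if h : a < b then
    max (max (subUturnInd U hs R p a (mid a b)) (subUturnInd U hs R p (mid a b + 1) b))
      (uturnInd U hs R a b p)
  else 0
termination_by (b - a).toNat
decreasing_by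
  · have h1 : a ≤ mid a b := by unfold mid; omega
    have h2 : mid a b < b := by unfold mid; omega
    omega
  · have h1 : a ≤ mid a b := by unfold mid; omega
    have h2 : mid a b < b := by unfold mid; omega
    omega

/-- The number of doublings `ℓ_min(θ,ρ,B,h,R)` selected by the no-U-turn procedure with at most
`2^M` leapfrog iterates. -/
def ellMin {d : ℕ} (U : ES d → ℝ) (hs : ℝ) (R : ℕ) (M : ℕ) (B : ℕ → Bool)
    (p : ES d × ES d) : ℕ :=
  sInf ({ℓ | 1 ≤ ℓ ∧ ℓ ≤ M - 1 ∧
      (uturnInd U hs R (aEnd B ℓ) (bEnd B ℓ) p = 1 ∨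
        subUturnInd U hs R p (aT B (ℓ + 1)) (bT B (ℓ + 1)) = 1)} ∪ {M})

/-- The categorical (Boltzmann) index-selection kernel `Q(L | θ, ρ, a, b, h, R)`. -/
def Qkernel {d : ℕ} (U : ES d → ℝ) (hs : ℝ) (R : ℕ) (p : ES d × ES d)
    (a b L : ℤ) : ℝ :=
  if a ≤ L ∧ L ≤ b then
    Real.exp (-Ham U (leapfrogIter U (hs / R) (R * L) p)) /
      ∑ k ∈ Finset.Icc a b, Real.exp (-Ham U (leapfrogIter U (hs / R) (R * k) p))
  else 0

/-! ### The standard normal target -/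

/-- One leapfrog step of size `h` for the standard normal potential `U(θ) = |θ|²/2`
(for which `∇U(θ) = θ`). -/
def gaussLeapfrog {d : ℕ} (h : ℝ) (p : ES d × ES d) : ES d × ES d :=
  let ρh := p.2 - (h / 2) • p.1
  let θ' := p.1 + h • ρh
  (θ', ρh - (h / 2) • θ')

/-- Integer iterates of the standard normal leapfrog integrator. -/
def gaussLeapfrogIter {d : ℕ} (h : ℝ) : ℤ → ES d × ES d → ES d × ES d
  | Int.ofNat n => (gaussLeapfrog h)^[n]
  | Int.negSucc n => (flipMom ∘ gaussLeapfrog h ∘ flipMom)^[n + 1]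

/-- The standard normal Hamiltonian `H(θ,ρ) = (|θ|² + |ρ|²)/2`. -/
def gaussHam {d : ℕ} (p : ES d × ES d) : ℝ := (1 / 2) * (‖p.1‖ ^ 2 + ‖p.2‖ ^ 2)

/-- The modified Hamiltonian `H_h(θ,ρ) = (1 − h²/4)|θ|²/2 + |ρ|²/2` preserved by the standard
normal leapfrog integrator for `h ∈ (0,2)`. -/
def gaussHamMod {d : ℕ} (h : ℝ) (p : ES d × ES d) : ℝ :=
  (1 / 2) * (1 - h ^ 2 / 4) * ‖p.1‖ ^ 2 + (1 / 2) * ‖p.2‖ ^ 2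

end

/-!
Moving the base point `L` coarse steps along the leapfrog orbit shifts every index by `-L`, so
all U-turn and sub-U-turn indicators are invariant under `(a, b, p) ↦ (a - L, b - L, Φ^{RL} p)`.
The first `ℓ` bits of `B*` are chosen so that its orbit at level `ℓ` is `[a - L, b - L]`, and its
later bits are those of `B`. The stopping test at level `ℓ` only sees the orbit at level `ℓ` and
the next bit, while "no stop before level `ℓ`" is equivalent to both halves of the orbit at
level `ℓ` being free of sub-U-turns, since unfolding the sub-U-turn indicator of a doubled orbit
splits it into the old orbit and its extension. Both conditions are therefore shift invariant.
-/

section Leapfrog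

variable {d : ℕ} (U : ES d → ℝ) (h : ℝ)

theorem flipMom_involutive : Function.Involutive (flipMom (d := d)) := fun p => by
  simp [flipMom]

theorem flipMom_leapfrog_flipMom_leapfrog (p : ES d × ES d) :
    flipMom (leapfrog U h (flipMom (leapfrog U h p))) = p := by
  obtain ⟨θ, ρ⟩ := p
  simp only [leapfrog, flipMom, Prod.mk.injEq]
  generalize gradient U (θ + h • (ρ - (h / 2) • gradient U θ)) = g
  have hθ : θ + h • (ρ - (h / 2) • gradient U θ) +
      h • (-(ρ - (h / 2) • gradient U θ - (h / 2) • g) - (h / 2) • g) = θ := by module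
  rw [hθ]
  exact ⟨rfl, by module⟩

noncomputable def leapfrogPerm : Equiv.Perm (ES d × ES d) where
  toFun := leapfrog U h
  invFun := flipMom ∘ leapfrog U h ∘ flipMom
  left_inv := flipMom_leapfrog_flipMom_leapfrog U h
  right_inv p :=
    flipMom_involutive.injective (flipMom_leapfrog_flipMom_leapfrog U h (flipMom p))

theorem leapfrogIter_eq_zpow (n : ℤ) : leapfrogIter U h n = ⇑(leapfrogPerm U h ^ n) := by
  cases n with
  | ofNat k =>
    rw [Int.ofNat_eq_natCast, zpow_natCast, ← Equiv.Perm.iterate_eq_pow]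
    rfl
  | negSucc k =>
    rw [zpow_negSucc, ← inv_pow, ← Equiv.Perm.iterate_eq_pow]
    rfl

theorem leapfrogIter_add (m n : ℤ) (p : ES d × ES d) :
    leapfrogIter U h (m + n) p = leapfrogIter U h m (leapfrogIter U h n p) := by
  simp only [leapfrogIter_eq_zpow, zpow_add, Equiv.Perm.mul_apply]

end Leapfrog

theorem mid_sub_sub (a b L : ℤ) : mid (a - L) (b - L) = mid a b - L := by
  unfold mid; omega

section Indicators

variable {d : ℕ} (U : ES d → ℝ) (hs : ℝ) (R : ℕ)

theorem uturnInd_le_one (a b : ℤ) (p : ES d × ES d) : uturnInd U hs R a b p ≤ 1 := by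
  simp only [uturnInd]
  split_ifs <;> omega

theorem subUturnInd_of_lt (p : ES d × ES d) {a b : ℤ} (hab : a < b) :
    subUturnInd U hs R p a b =
      max (max (subUturnInd U hs R p a (mid a b)) (subUturnInd U hs R p (mid a b + 1) b))
        (uturnInd U hs R a b p) := by
  rw [subUturnInd, dif_pos hab]

theorem subUturnInd_of_le (p : ES d × ES d) {a b : ℤ} (hba : b ≤ a) :
    subUturnInd U hs R p a b = 0 := by
  rw [subUturnInd, dif_neg (not_lt.mpr hba)]

theorem subUturnInd_le_one (p : ES d × ES d) (a b : ℤ) : subUturnInd U hs R p a b ≤ 1 := by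
  induction a, b using subUturnInd.induct with
  | case1 a b hab ih₁ ih₂ =>
    rw [subUturnInd_of_lt U hs R p hab]
    exact max_le (max_le ih₁ ih₂) (uturnInd_le_one U hs R a b p)
  | case2 a b hab => rw [subUturnInd_of_le U hs R p (not_lt.mp hab)]; exact zero_le_one

theorem uturnInd_shift (L a b : ℤ) (p : ES d × ES d) :
    uturnInd U hs R (a - L) (b - L) (leapfrogIter U (hs / R) (R * L) p) =
      uturnInd U hs R a b p := by
  have hflow (c : ℤ) : leapfrogIter U (hs / R) (R * (c - L))
      (leapfrogIter U (hs / R) (R * L) p) = leapfrogIter U (hs / R) (R * c) p := by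
    rw [← leapfrogIter_add, mul_sub, sub_add_cancel]
  simp only [uturnInd, hflow]

theorem subUturnInd_shift (L : ℤ) (p : ES d × ES d) (a b : ℤ) :
    subUturnInd U hs R (leapfrogIter U (hs / R) (R * L) p) (a - L) (b - L) =
      subUturnInd U hs R p a b := by
  induction a, b using subUturnInd.induct with
  | case1 a b hab ih₁ ih₂ =>
    rw [subUturnInd_of_lt _ _ _ _ (sub_lt_sub_right hab L), subUturnInd_of_lt U hs R p hab,
      mid_sub_sub, sub_add_eq_add_sub, ih₁, ih₂, uturnInd_shift]
  | case2 a b hab =>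
    rw [subUturnInd_of_le _ _ _ _ (sub_le_sub_right (not_lt.mp hab) L),
      subUturnInd_of_le U hs R p (not_lt.mp hab)]

end Indicators

theorem bEnd_eq_aEnd_add (B : ℕ → Bool) (ℓ : ℕ) : bEnd B ℓ = aEnd B ℓ + 2 ^ ℓ - 1 := by
  induction ℓ with
  | zero => rfl
  | succ ℓ ih =>
    have hpos : (0 : ℤ) < 2 ^ ℓ := by positivity
    simp only [aEnd, bEnd, ih, pow_succ]
    cases B (ℓ + 1) <;> simp only [signBit, Bool.false_eq_true, ↓reduceIte] <;> omega

theorem aEnd_lt_bEnd (B : ℕ → Bool) {ℓ : ℕ} (hℓ : 1 ≤ ℓ) : aEnd B ℓ < bEnd B ℓ := by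
  have : (2 : ℤ) ≤ 2 ^ ℓ := le_self_pow₀ one_le_two (by omega)
  rw [bEnd_eq_aEnd_add]
  omega

theorem aEnd_congr {B C : ℕ → Bool} {ℓ : ℕ} (h : ∀ i, 1 ≤ i → i ≤ ℓ → B i = C i) :
    aEnd B ℓ = aEnd C ℓ := by
  induction ℓ with
  | zero => rfl
  | succ ℓ ih =>
    simp only [aEnd, ih fun i hi₁ hi₂ => h i hi₁ (by omega), h (ℓ + 1) (by omega) le_rfl]

theorem aEnd_beta (ℓ : ℕ) {L a b : ℤ} (hb : b = a + 2 ^ ℓ - 1) (haL : a ≤ L) (hLb : L ≤ b) :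
    aEnd (beta ℓ L a b) ℓ = a - L := by
  induction ℓ generalizing a b with
  | zero => simp only [aEnd]; omega
  | succ ℓ ih =>
    have hb' : b = a + 2 * 2 ^ ℓ - 1 := by rw [hb, pow_succ, mul_comm]
    have hmid : mid a b = a + 2 ^ ℓ - 1 := by unfold mid; omega
    by_cases hL : mid a b + 1 ≤ L
    · have hbits : ∀ i, 1 ≤ i → i ≤ ℓ → beta (ℓ + 1) L a b i = beta ℓ L (mid a b + 1) b i := by
        intro i _ hi
        rw [beta, if_neg (by omega), if_pos hL]
      have htop : beta (ℓ + 1) L a b (ℓ + 1) = true := by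
        rw [beta, if_pos rfl]
        exact decide_eq_true hL
      rw [aEnd, aEnd_congr hbits, ih (by omega) hL hLb, htop, signBit, if_pos rfl]
      omega
    · have hbits : ∀ i, 1 ≤ i → i ≤ ℓ → beta (ℓ + 1) L a b i = beta ℓ L a (mid a b) i := by
        intro i _ hi
        rw [beta, if_neg (by omega), if_neg hL]
      have htop : beta (ℓ + 1) L a b (ℓ + 1) = false := by
        rw [beta, if_pos rfl]
        exact decide_eq_false hL
      rw [aEnd, aEnd_congr hbits, ih hmid haL (by omega), htop, signBit, if_neg Bool.false_ne_true]
      omega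

theorem aEnd_bstar {ℓ : ℕ} {L a b : ℤ} (B : ℕ → Bool) (hb : b = a + 2 ^ ℓ - 1) (haL : a ≤ L)
    (hLb : L ≤ b) : aEnd (bstar ℓ L a b B) ℓ = a - L :=
  (aEnd_congr fun _ hi₁ hi₂ => if_pos ⟨hi₁, hi₂⟩).trans (aEnd_beta ℓ hb haL hLb)

theorem bstar_of_lt {ℓ i : ℕ} (L a b : ℤ) (B : ℕ → Bool) (hi : ℓ < i) : bstar ℓ L a b B i = B i :=
  if_neg (by omega)

/-- The halves of the doubled orbit `[a_{ℓ+1}, b_{ℓ+1}]` are the old orbit `[a_ℓ, b_ℓ]` and its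
extension `[ã_{ℓ+1}, b̃_{ℓ+1}]`, in the order given by the bit `B_{ℓ+1}`. -/
theorem halves_aEnd_bEnd_succ (B : ℕ → Bool) (ℓ : ℕ) :
    (aEnd B (ℓ + 1) = aEnd B ℓ ∧ mid (aEnd B (ℓ + 1)) (bEnd B (ℓ + 1)) = bEnd B ℓ ∧
        bEnd B ℓ + 1 = aT B (ℓ + 1) ∧ bEnd B (ℓ + 1) = bT B (ℓ + 1)) ∨
      (aEnd B (ℓ + 1) = aT B (ℓ + 1) ∧ mid (aEnd B (ℓ + 1)) (bEnd B (ℓ + 1)) = bT B (ℓ + 1) ∧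
        bT B (ℓ + 1) + 1 = aEnd B ℓ ∧ bEnd B (ℓ + 1) = bEnd B ℓ) := by
  have hb := bEnd_eq_aEnd_add B ℓ
  have hpos : (0 : ℤ) < 2 ^ ℓ := by positivity
  simp only [aEnd, bEnd, aT, bT, mid, Nat.add_sub_cancel]
  cases B (ℓ + 1) <;> simp only [signBit, Bool.false_eq_true, ↓reduceIte] <;> omega

section Selection

variable {d : ℕ} (U : ES d → ℝ) (hs : ℝ) (R : ℕ)

def StopsAt (B : ℕ → Bool) (q : ES d × ES d) (k : ℕ) : Prop :=
  uturnInd U hs R (aEnd B k) (bEnd B k) q = 1 ∨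
    subUturnInd U hs R q (aT B (k + 1)) (bT B (k + 1)) = 1

def HalvesUturnFree (q : ES d × ES d) (a b : ℤ) : Prop :=
  subUturnInd U hs R q a (mid a b) = 0 ∧ subUturnInd U hs R q (mid a b + 1) b = 0

theorem not_stopsAt_iff (B : ℕ → Bool) (q : ES d × ES d) (k : ℕ) :
    ¬StopsAt U hs R B q k ↔ uturnInd U hs R (aEnd B k) (bEnd B k) q = 0 ∧
      subUturnInd U hs R q (aT B (k + 1)) (bT B (k + 1)) = 0 := by
  have := uturnInd_le_one U hs R (aEnd B k) (bEnd B k) q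
  have := subUturnInd_le_one U hs R q (aT B (k + 1)) (bT B (k + 1))
  unfold StopsAt
  omega

theorem subUturnInd_eq_zero_iff (q : ES d × ES d) {a b : ℤ} (hab : a < b) :
    subUturnInd U hs R q a b = 0 ↔ HalvesUturnFree U hs R q a b ∧ uturnInd U hs R a b q = 0 := by
  rw [subUturnInd_of_lt U hs R q hab, max_eq_zero, max_eq_zero]
  rfl

theorem halvesUturnFree_succ_iff (B : ℕ → Bool) (q : ES d × ES d) (ℓ : ℕ) :
    HalvesUturnFree U hs R q (aEnd B (ℓ + 1)) (bEnd B (ℓ + 1)) ↔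
      subUturnInd U hs R q (aEnd B ℓ) (bEnd B ℓ) = 0 ∧
        subUturnInd U hs R q (aT B (ℓ + 1)) (bT B (ℓ + 1)) = 0 := by
  unfold HalvesUturnFree
  rcases halves_aEnd_bEnd_succ B ℓ with ⟨h₁, h₂, h₃, h₄⟩ | ⟨h₁, h₂, h₃, h₄⟩ <;>
    rw [h₂, h₃, h₁, h₄]
  exact and_comm

theorem forall_not_stopsAt_iff (B : ℕ → Bool) (q : ES d × ES d) (ℓ : ℕ) :
    (∀ k, 1 ≤ k → k ≤ ℓ → ¬StopsAt U hs R B q k) ↔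
      HalvesUturnFree U hs R q (aEnd B (ℓ + 1)) (bEnd B (ℓ + 1)) := by
  rw [halvesUturnFree_succ_iff]
  induction ℓ with
  | zero =>
    exact iff_of_true (fun k hk₁ hk₂ => absurd hk₂ (by omega))
      ⟨subUturnInd_of_le U hs R q le_rfl, subUturnInd_of_le U hs R q le_rfl⟩
  | succ ℓ ih =>
    have hsplit : (∀ k, 1 ≤ k → k ≤ ℓ + 1 → ¬StopsAt U hs R B q k) ↔
        (∀ k, 1 ≤ k → k ≤ ℓ → ¬StopsAt U hs R B q k) ∧ ¬StopsAt U hs R B q (ℓ + 1) :=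
      ⟨fun h => ⟨fun k hk₁ hk₂ => h k hk₁ (by omega), h (ℓ + 1) (by omega) le_rfl⟩,
        fun h k hk₁ hk₂ => (Nat.lt_or_eq_of_le hk₂).elim (fun hk => h.1 k hk₁ (by omega))
          (fun hk => hk ▸ h.2)⟩
    rw [hsplit, ih, not_stopsAt_iff,
      subUturnInd_eq_zero_iff U hs R q (aEnd_lt_bEnd B (ℓ := ℓ + 1) (by omega)),
      halvesUturnFree_succ_iff]
    tauto

theorem ellMin_eq_iff {M ℓ : ℕ} (B : ℕ → Bool) (q : ES d × ES d) (hℓ : 1 ≤ ℓ) (hℓM : ℓ ≤ M) :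
    ellMin U hs R M B q = ℓ ↔
      (ℓ = M ∨ StopsAt U hs R B q ℓ) ∧ HalvesUturnFree U hs R q (aEnd B ℓ) (bEnd B ℓ) := by
  obtain ⟨j, rfl⟩ : ∃ j, ℓ = j + 1 := ⟨ℓ - 1, by omega⟩
  rw [← forall_not_stopsAt_iff]
  change sInf ({k | 1 ≤ k ∧ k ≤ M - 1 ∧ StopsAt U hs R B q k} ∪ {M}) = _ ↔ _
  rw [csInf_eq_iff ⟨M, Or.inr rfl⟩]
  constructor
  · rintro ⟨hmem, hleast⟩
    refine ⟨?_, fun k hk₁ hk₂ hk => absurd (hleast k (Or.inl ⟨hk₁, by omega, hk⟩)) (by omega)⟩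
    rcases hmem with ⟨-, -, h⟩ | h
    exacts [Or.inr h, Or.inl h]
  · rintro ⟨hmem, hfree⟩
    refine ⟨?_, ?_⟩
    · rcases hmem with h | h
      · exact Or.inr h
      · rcases eq_or_ne (j + 1) M with hM | hM
        exacts [Or.inr hM, Or.inl ⟨hℓ, by omega, h⟩]
    · rintro k (⟨hk₁, -, hk⟩ | rfl)
      · by_contra hlt
        exact hfree k hk₁ (by omega) hk
      · exact hℓM

theorem stopsAt_shift {B C : ℕ → Bool} {k : ℕ} {L : ℤ} (p : ES d × ES d)
    (ha : aEnd C k = aEnd B k - L) (hbit : C (k + 1) = B (k + 1)) :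
    StopsAt U hs R C (leapfrogIter U (hs / R) (R * L) p) k ↔ StopsAt U hs R B p k := by
  have hb : bEnd C k = bEnd B k - L := by
    rw [bEnd_eq_aEnd_add, ha, bEnd_eq_aEnd_add]
    ring
  have haT : aT C (k + 1) = aT B (k + 1) - L := by
    simp only [aT, Nat.add_sub_cancel, ha, hbit]
    ring
  have hbT : bT C (k + 1) = bT B (k + 1) - L := by
    simp only [bT, Nat.add_sub_cancel, hb, hbit]
    ring
  unfold StopsAt
  rw [ha, hb, haT, hbT, uturnInd_shift, subUturnInd_shift]

theorem halvesUturnFree_shift (L a b : ℤ) (p : ES d × ES d) :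
    HalvesUturnFree U hs R (leapfrogIter U (hs / R) (R * L) p) (a - L) (b - L) ↔
      HalvesUturnFree U hs R p a b := by
  unfold HalvesUturnFree
  rw [mid_sub_sub, sub_add_eq_add_sub, subUturnInd_shift, subUturnInd_shift]

end Selection

theorem orbit_selection_symmetry_general {d : ℕ} (U : ES d → ℝ)
    (hs : ℝ) (R : ℕ) (M ℓ : ℕ) (B : ℕ → Bool) (a b L : ℤ)
    (hD : memD M B ℓ a b L) (p : ES d × ES d)
    (Bs : ℕ → Bool) (hBs : Bs = bstar ℓ L a b B)
    (p' : ES d × ES d) (hp' : p' = leapfrogIter U (hs / R) (R * L) p) :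
    (ℓ = ellMin U hs R M B p ∧ a = aEnd B ℓ ∧ b = bEnd B ℓ) ↔
      (ℓ = ellMin U hs R M Bs p' ∧ a - L = aEnd Bs ℓ ∧ b - L = bEnd Bs ℓ) := by
  obtain ⟨hℓ, hℓM, rfl, rfl, haL, hLb⟩ := hD
  subst hp'
  have haBs : aEnd Bs ℓ = aEnd B ℓ - L := hBs ▸ aEnd_bstar B (bEnd_eq_aEnd_add B ℓ) haL hLb
  have hbBs : bEnd Bs ℓ = bEnd B ℓ - L := by
    rw [bEnd_eq_aEnd_add, haBs, bEnd_eq_aEnd_add]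
    ring
  have hbit : Bs (ℓ + 1) = B (ℓ + 1) := hBs ▸ bstar_of_lt L _ _ B (Nat.lt_succ_self ℓ)
  have hsel : ellMin U hs R M B p = ℓ ↔
      ellMin U hs R M Bs (leapfrogIter U (hs / R) (R * L) p) = ℓ := by
    rw [ellMin_eq_iff U hs R _ _ hℓ hℓM, ellMin_eq_iff U hs R _ _ hℓ hℓM,
      stopsAt_shift U hs R p haBs hbit, haBs, hbBs, halvesUturnFree_shift]
  simp only [haBs, hbBs, eq_comm (a := ℓ), hsel, and_true]

/-- Symmetry of the no-U-turn orbit-selection distribution: for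
`(B,ℓ,a,b,L) ∈ D`, `B* = B*(L,a,b,B)` and `p' = Φ_{h/R}^{RL}(θ,ρ)`,
`P(a,b,ℓ | θ,ρ,B,h,R) = P(a−L, b−L, ℓ | p', B*, h, R)`; that is, `(ℓ = ℓ_min(θ,ρ,B,h,R)` and
`a = a_ℓ(B)` and `b = b_ℓ(B))` iff `(ℓ = ℓ_min(p',B*,h,R)` and `a−L = a_ℓ(B*)` and
`b−L = b_ℓ(B*))`. -/
theorem orbit_selection_symmetry {d : ℕ} (U : ES d → ℝ) (hU : ContDiff ℝ 1 U)
    (hs : ℝ) (hhs : 0 < hs) (R : ℕ) (hR : 1 ≤ R) (M ℓ : ℕ) (B : ℕ → Bool) (a b L : ℤ)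
    (hD : memD M B ℓ a b L) (p : ES d × ES d)
    (Bs : ℕ → Bool) (hBs : Bs = bstar ℓ L a b B)
    (p' : ES d × ES d) (hp' : p' = leapfrogIter U (hs / R) (R * L) p) :
    (ℓ = ellMin U hs R M B p ∧ a = aEnd B ℓ ∧ b = bEnd B ℓ) ↔
      (ℓ = ellMin U hs R M Bs p' ∧ a - L = aEnd Bs ℓ ∧ b - L = bEnd Bs ℓ) :=
  orbit_selection_symmetry_general U hs R M ℓ B a b L hD p Bs hBs p' hp'
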